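/- arXiv:2304.07485 — 2 statements merged into one kernel-verified Lean document; each statement's English description precedes it below -/
import Mathlib

section
/- Let Φ, Ψ : ℝⁿ → ℝⁿ be mutually inverse bijections, with Φ L-Lipschitz, L ≥ 1. Let F, G : ℝⁿ → ℝⁿ satisfy ‖F(x) - Φ(x)‖ ≤ ε_f and ‖G(x) - Ψ(x)‖ ≤ ε_g for all x, with Ψ also L-Lipschitz. Fix u₀ ∈ ℝⁿ and K ∈ ℕ. Define û(k) = F^k(u₀), u(k) = Φ^k(u₀), and ū(k) = G^{K-k}(û(K)). Then ‖ū(0) - u₀‖ ≤ (∑_{j=0}^{K-1} L^j) · (ε_f · L^K + ε_g). -/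
lemma iter_lip {E : Type*} [NormedAddCommGroup E] (L : ℝ) (hL : 1 ≤ L)
    (g : E → E) (hg : ∀ x y, ‖g x - g y‖ ≤ L * ‖x - y‖) (k : ℕ) (x y : E) :
    ‖g^[k] x - g^[k] y‖ ≤ L ^ k * ‖x - y‖ := by
  induction k with
  | zero => simp
  | succ k ih =>
    rw [Function.iterate_succ_apply', Function.iterate_succ_apply', pow_succ, mul_comm (L^k) L,
      mul_assoc]
    exact (hg _ _).trans (by nlinarith [norm_nonneg (g^[k] x - g^[k] y), hL])

lemma iter_err {E : Type*} [NormedAddCommGroup E] (L ε : ℝ) (hL : 1 ≤ L) (hε : 0 ≤ ε)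
    (f g : E → E) (hg : ∀ x y, ‖g x - g y‖ ≤ L * ‖x - y‖)
    (hf : ∀ x, ‖f x - g x‖ ≤ ε) (k : ℕ) (x : E) :
    ‖f^[k] x - g^[k] x‖ ≤ (∑ j ∈ Finset.range k, L ^ j) * ε := by
  induction k with
  | zero => simp
  | succ k ih =>
    rw [Function.iterate_succ_apply', Function.iterate_succ_apply', geom_sum_succ]
    calc ‖f (f^[k] x) - g (g^[k] x)‖
        ≤ ‖f (f^[k] x) - g (f^[k] x)‖ + ‖g (f^[k] x) - g (g^[k] x)‖ := by
          have := norm_sub_le_norm_sub_add_norm_sub (f (f^[k] x)) (g (f^[k] x)) (g (g^[k] x))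
          linarith
      _ ≤ ε + L * ‖f^[k] x - g^[k] x‖ := add_le_add (hf _) (hg _ _)
      _ ≤ (L * ∑ j ∈ Finset.range k, L ^ j + 1) * ε := by nlinarith

theorem reciprocal_prediction_error_bound (n : ℕ) (L εf εg : ℝ) (hL : 1 ≤ L)
    (hεf : 0 ≤ εf) (hεg : 0 ≤ εg)
    (Φ Ψ F G : EuclideanSpace ℝ (Fin n) → EuclideanSpace ℝ (Fin n))
    (hinv₁ : ∀ x, Ψ (Φ x) = x) (hinv₂ : ∀ x, Φ (Ψ x) = x)
    (hΦ : ∀ x y, ‖Φ x - Φ y‖ ≤ L * ‖x - y‖)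
    (hΨ : ∀ x y, ‖Ψ x - Ψ y‖ ≤ L * ‖x - y‖)
    (hF : ∀ x, ‖F x - Φ x‖ ≤ εf)
    (hG : ∀ x, ‖G x - Ψ x‖ ≤ εg)
    (u₀ : EuclideanSpace ℝ (Fin n)) (K : ℕ) :
    ‖G^[K] (F^[K] u₀) - u₀‖ ≤ (∑ j ∈ Finset.range K, L ^ j) * (εf * L ^ K + εg) := by
  set S := ∑ j ∈ Finset.range K, L ^ j with hS
  have hS0 : 0 ≤ S := Finset.sum_nonneg fun j _ => pow_nonneg (by linarith) j
  have hinvK : Ψ^[K] (Φ^[K] u₀) = u₀ :=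
    (Function.LeftInverse.iterate hinv₁ K) u₀
  set y := F^[K] u₀ with hy
  have h1 : ‖G^[K] y - Ψ^[K] y‖ ≤ S * εg := iter_err L εg hL hεg G Ψ hΨ hG K y
  have h2 : ‖Ψ^[K] y - u₀‖ ≤ L ^ K * (S * εf) := by
    calc ‖Ψ^[K] y - u₀‖ = ‖Ψ^[K] y - Ψ^[K] (Φ^[K] u₀)‖ := by rw [hinvK]
      _ ≤ L ^ K * ‖y - Φ^[K] u₀‖ := iter_lip L hL Ψ hΨ K _ _
      _ ≤ L ^ K * (S * εf) := by
          have := iter_err L εf hL hεf F Φ hΦ hF K u₀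
          have hLK : (0:ℝ) ≤ L ^ K := pow_nonneg (by linarith) K
          exact mul_le_mul_of_nonneg_left this hLK
  have h3 : ‖G^[K] y - u₀‖ ≤ ‖G^[K] y - Ψ^[K] y‖ + ‖Ψ^[K] y - u₀‖ :=
    norm_sub_le_norm_sub_add_norm_sub _ _ _
  calc ‖G^[K] y - u₀‖ ≤ S * εg + L ^ K * (S * εf) := by linarith
    _ = S * (εf * L ^ K + εg) := by ring
end

section
/- Combining the two bounds of the theorem: under the assumptions that Φ, Ψ are mutually inverse L-Lipschitz maps (L ≥ 1), F, G approximate them uniformly with errors ε_f, ε_g, and M := sup_x ‖G^K(F^K(x)) - x‖ < ∞, the reciprocal prediction error at time 0 satisfies ‖G^K(F^K(u₀)) - u₀‖ ≤ min( M , (∑_{j=0}^{K-1} L^j)(ε_f L^K + ε_g) ) for every u₀. -/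
private lemma lip_iter {E : Type*} [NormedAddCommGroup E] {L : ℝ} (hL : 0 ≤ L)
    {Ψ : E → E} (hΨ : ∀ x y, ‖Ψ x - Ψ y‖ ≤ L * ‖x - y‖) :
    ∀ k x y, ‖Ψ^[k] x - Ψ^[k] y‖ ≤ L ^ k * ‖x - y‖ := by
  intro k
  induction k with
  | zero => intro x y; simp
  | succ k ih =>
    intro x y
    rw [Function.iterate_succ_apply', Function.iterate_succ_apply']
    calc ‖Ψ (Ψ^[k] x) - Ψ (Ψ^[k] y)‖ ≤ L * ‖Ψ^[k] x - Ψ^[k] y‖ := hΨ _ _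
      _ ≤ L * (L ^ k * ‖x - y‖) := by
          exact mul_le_mul_of_nonneg_left (ih x y) hL
      _ = L ^ (k + 1) * ‖x - y‖ := by ring

private lemma err_iter {E : Type*} [NormedAddCommGroup E] {L ε : ℝ} (hL : 1 ≤ L)
    (hε : 0 ≤ ε) {Ψ G : E → E} (hΨ : ∀ x y, ‖Ψ x - Ψ y‖ ≤ L * ‖x - y‖)
    (hG : ∀ x, ‖G x - Ψ x‖ ≤ ε) :
    ∀ k x, ‖G^[k] x - Ψ^[k] x‖ ≤ (∑ j ∈ Finset.range k, L ^ j) * ε := by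
  intro k
  induction k with
  | zero => intro x; simp
  | succ k ih =>
    intro x
    rw [Function.iterate_succ_apply', Function.iterate_succ_apply']
    have h1 : ‖G (G^[k] x) - Ψ (Ψ^[k] x)‖ ≤
        ‖G (G^[k] x) - Ψ (G^[k] x)‖ + ‖Ψ (G^[k] x) - Ψ (Ψ^[k] x)‖ := by
      have := norm_add_le (G (G^[k] x) - Ψ (G^[k] x)) (Ψ (G^[k] x) - Ψ (Ψ^[k] x))
      simpa using this
    have h2 := hG (G^[k] x)
    have h3 : ‖Ψ (G^[k] x) - Ψ (Ψ^[k] x)‖ ≤ L * ((∑ j ∈ Finset.range k, L ^ j) * ε) :=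
      (hΨ _ _).trans (mul_le_mul_of_nonneg_left (ih x) (by linarith))
    have h4 : (∑ j ∈ Finset.range (k + 1), L ^ j) = 1 + L * ∑ j ∈ Finset.range k, L ^ j := by
      rw [geom_sum_succ]; ring
    rw [h4]; nlinarith [h1, h2, h3]
  
theorem reciprocal_error_min_bound (n : ℕ) (L εf εg M : ℝ) (hL : 1 ≤ L)
    (hεf : 0 ≤ εf) (hεg : 0 ≤ εg)
    (Φ Ψ F G : EuclideanSpace ℝ (Fin n) → EuclideanSpace ℝ (Fin n))
    (hinv₁ : ∀ x, Ψ (Φ x) = x) (hinv₂ : ∀ x, Φ (Ψ x) = x)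
    (hΦ : ∀ x y, ‖Φ x - Φ y‖ ≤ L * ‖x - y‖)
    (hΨ : ∀ x y, ‖Ψ x - Ψ y‖ ≤ L * ‖x - y‖)
    (hF : ∀ x, ‖F x - Φ x‖ ≤ εf)
    (hG : ∀ x, ‖G x - Ψ x‖ ≤ εg)
    (K : ℕ)
    (hM : ∀ x, ‖G^[K] (F^[K] x) - x‖ ≤ M) :
    ∀ u₀ : EuclideanSpace ℝ (Fin n),
      ‖G^[K] (F^[K] u₀) - u₀‖ ≤ min M ((∑ j ∈ Finset.range K, L ^ j) * (εf * L ^ K + εg)) := by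
  intro u₀
  refine le_min (hM u₀) ?_
  have hL0 : (0:ℝ) ≤ L := by linarith
  -- Ψ^[K] (Φ^[K] x) = x
  have hinvK' : ∀ k x, Ψ^[k] (Φ^[k] x) = x := by
    intro k
    induction k with
    | zero => simp
    | succ k ih =>
      intro x
      rw [Function.iterate_succ_apply' Φ, Function.iterate_succ_apply Ψ, hinv₁]
      exact ih x
  have hinvK : ∀ x, Ψ^[K] (Φ^[K] x) = x := hinvK' K
  have e1 : ‖G^[K] (F^[K] u₀) - Ψ^[K] (F^[K] u₀)‖ ≤ (∑ j ∈ Finset.range K, L ^ j) * εg :=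
    err_iter hL hεg hΨ hG K _
  have e2 : ‖F^[K] u₀ - Φ^[K] u₀‖ ≤ (∑ j ∈ Finset.range K, L ^ j) * εf :=
    err_iter hL hεf hΦ hF K _
  have e3 : ‖Ψ^[K] (F^[K] u₀) - Ψ^[K] (Φ^[K] u₀)‖ ≤ L ^ K * ((∑ j ∈ Finset.range K, L ^ j) * εf) :=
    (lip_iter hL0 hΨ K _ _).trans (mul_le_mul_of_nonneg_left e2 (pow_nonneg hL0 K))
  have tri : ‖G^[K] (F^[K] u₀) - u₀‖ ≤
      ‖G^[K] (F^[K] u₀) - Ψ^[K] (F^[K] u₀)‖ + ‖Ψ^[K] (F^[K] u₀) - Ψ^[K] (Φ^[K] u₀)‖ := by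
    have := norm_add_le (G^[K] (F^[K] u₀) - Ψ^[K] (F^[K] u₀))
      (Ψ^[K] (F^[K] u₀) - Ψ^[K] (Φ^[K] u₀))
    rw [hinvK u₀] at *
    simpa [hinvK u₀] using this
  have : ‖G^[K] (F^[K] u₀) - u₀‖ ≤
      (∑ j ∈ Finset.range K, L ^ j) * εg + L ^ K * ((∑ j ∈ Finset.range K, L ^ j) * εf) := by
    linarith
  calc ‖G^[K] (F^[K] u₀) - u₀‖ ≤ _ := this
    _ = (∑ j ∈ Finset.range K, L ^ j) * (εf * L ^ K + εg) := by ring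
end
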